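/- arXiv:2103.05726 — 2 statements merged into one kernel-verified Lean document; each statement's English description precedes it below -/
import Mathlib

section
/- For all real numbers a > 0 and b, c ≥ 0, the 4×4 real matrix M(a,b,c) with rows (2a(a+b), 2a², c(a+b), ac), (2ab, 4a², bc, 2ac), (a(a+b), a², (a+c)(a+b), a(a+c)), (ab, 2a², b(a+c), 2a(a+c)) is invertible; consequently, if the four face Bézier coefficients obtained by applying M(a,b,c)/((2a+b)(2a+c)) to a vector of four spline coefficients all vanish, then the four spline coefficients themselves vanish. -/
/-- The matrix of Eq. (33) of the paper (unnormalized), expressing the four face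
Bézier coefficients of an irregular face in terms of four spline coefficients. -/
noncomputable def M (a b c : ℝ) : Matrix (Fin 4) (Fin 4) ℝ :=
  !![2*a*(a+b), 2*a^2, c*(a+b),     a*c;
     2*a*b,     4*a^2, b*c,         2*a*c;
     a*(a+b),   a^2,   (a+c)*(a+b), a*(a+c);
     a*b,       2*a^2, b*(a+c),     2*a*(a+c)]

theorem det_M (a b c : ℝ) : (M a b c).det = a ^ 4 * (2 * a + b) ^ 2 * (2 * a + c) ^ 2 := by
  simp [M, Matrix.det_succ_row_zero, Fin.sum_univ_succ, Fin.succAbove, Fin.castSucc, Fin.castAdd,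
    Fin.castLE]
  ring

theorem det_M_pos (a b c : ℝ) (ha : 0 < a) (hb : 0 ≤ b) (hc : 0 ≤ c) : 0 < (M a b c).det := by
  have hb' : 0 < 2 * a + b := by linarith
  have hc' : 0 < 2 * a + c := by linarith
  rw [det_M]
  positivity

/-- For `a > 0` and `b, c ≥ 0`, the matrix `M(a,b,c)` is invertible; consequently,
if the four face Bézier coefficients obtained by applying
`M(a,b,c)/((2a+b)(2a+c))` to a vector of four spline coefficients all vanish,
then the four spline coefficients themselves vanish. -/
theorem M_invertible (a b c : ℝ) (ha : 0 < a) (hb : 0 ≤ b) (hc : 0 ≤ c) :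
    IsUnit (M a b c) ∧
    ∀ v : Fin 4 → ℝ,
      (((2*a + b) * (2*a + c))⁻¹ • M a b c).mulVec v = 0 → v = 0 := by
  have hdet := det_M_pos a b c ha hb hc
  have hscale : 0 < ((2 * a + b) * (2 * a + c))⁻¹ := inv_pos.2 (mul_pos (by linarith) (by linarith))
  refine ⟨(Matrix.isUnit_iff_isUnit_det _).2 hdet.ne'.isUnit,
    fun v => Matrix.eq_zero_of_mulVec_eq_zero ?_⟩
  rw [Matrix.det_smul]
  positivity
end

section
/- For all real numbers a, b, c ≥ 0 with 2a + b > 0 and 2a + c > 0, every row of the 4×4 real matrix M(a,b,c) with rows (2a(a+b), 2a², c(a+b), ac), (2ab, 4a², bc, 2ac), (a(a+b), a², (a+c)(a+b), a(a+c)), (ab, 2a², b(a+c), 2a(a+c)) sums to (2a+b)(2a+c), and every entry of M(a,b,c) is nonnegative; hence the normalized matrix M(a,b,c)/((2a+b)(2a+c)) is row-stochastic, so each face Bézier control point of an irregular face is a convex combination of the four spline control points at its corners. -/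
namespace Matrix

theorem inv_smul_mem_rowStochastic {R n : Type*} [Field R] [LinearOrder R]
    [IsStrictOrderedRing R] [Fintype n] [DecidableEq n] {A : Matrix n n R} {s : R} (hs : 0 < s)
    (hA : ∀ i j, 0 ≤ A i j) (hrow : ∀ i, ∑ j, A i j = s) :
    s⁻¹ • A ∈ rowStochastic R n := by
  refine mem_rowStochastic_iff_sum.2 ⟨fun i j => ?_, fun i => ?_⟩
  · exact smul_nonneg (inv_nonneg.2 hs.le) (hA i j)
  · simp only [smul_apply, smul_eq_mul, ← Finset.mul_sum, hrow]
    exact inv_mul_cancel₀ hs.ne'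

end Matrix

theorem M_sum_row (a b c : ℝ) (i : Fin 4) :
    ∑ j : Fin 4, M a b c i j = (2*a + b) * (2*a + c) := by
  fin_cases i <;>
    simp only [M, Fin.sum_univ_four, Matrix.of_apply, Matrix.cons_val', Matrix.cons_val,
      Matrix.cons_val_fin_one, Fin.reduceFinMk, Fin.zero_eta, Fin.mk_one, Fin.isValue] <;> ring

theorem M_nonneg {a b c : ℝ} (ha : 0 ≤ a) (hb : 0 ≤ b) (hc : 0 ≤ c) (i j : Fin 4) :
    0 ≤ M a b c i j := by
  fin_cases i <;> fin_cases j <;>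
    simp only [M, Matrix.of_apply, Matrix.cons_val', Matrix.cons_val, Matrix.cons_val_fin_one,
      Fin.reduceFinMk, Fin.zero_eta, Fin.mk_one, Fin.isValue] <;> positivity

/-- For `a, b, c ≥ 0` with `2a + b > 0` and `2a + c > 0`, every row of `M(a,b,c)`
sums to `(2a+b)(2a+c)` and every entry of `M(a,b,c)` is nonnegative; hence the
normalized matrix `M(a,b,c)/((2a+b)(2a+c))` is row-stochastic, so each face Bézier
control point is a convex combination of the four spline control points. -/
theorem M_row_stochastic (a b c : ℝ) (ha : 0 ≤ a) (hb : 0 ≤ b) (hc : 0 ≤ c)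
    (hab : 0 < 2*a + b) (hac : 0 < 2*a + c) :
    (∀ i : Fin 4, ∑ j : Fin 4, M a b c i j = (2*a + b) * (2*a + c)) ∧
    (∀ i j : Fin 4, 0 ≤ M a b c i j) ∧
    (∀ i : Fin 4, ∑ j : Fin 4, (((2*a + b) * (2*a + c))⁻¹ • M a b c) i j = 1) := by
  have hM := Matrix.inv_smul_mem_rowStochastic (mul_pos hab hac) (M_nonneg ha hb hc)
    (M_sum_row a b c)
  exact ⟨M_sum_row a b c, M_nonneg ha hb hc, Matrix.sum_row_of_mem_rowStochastic hM⟩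
end
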